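/- arXiv:math/0503437 — 2 statements merged into one kernel-verified Lean document; each statement's English description precedes it below -/
import Mathlib

section
/- Let T : ℝᵈ → ℝᵈ be an invertible linear map with ‖T⁻¹‖ < 1, let δ > 0, and for x ∈ ℝᵈ and k ∈ ℕ define the dynamical basis set B_k(x) = T⁻ᵏ(closedBall(Tᵏx, δ)), i.e. B_k(x) = {x + T⁻ᵏv : ‖v‖ ≤ δ}. Then for every Lebesgue-measurable set S ⊆ ℝᵈ, Lebesgue-almost every x ∈ S satisfies m(B_k(x) ∩ S)/m(B_k(x)) → 1 as k → ∞, where m denotes Lebesgue measure on ℝᵈ; that is, almost every point of S is a dynamical density point of S. -/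
/-!
Writing `Cₖ = T⁻ᵏ(closedBall 0 δ)`, we have `Bₖ(x) = x + Cₖ`, and the `Cₖ` are closed, convex,
symmetric, decreasing and shrink to `0`. Convexity and symmetry replace the doubling property of
balls by an engulfing property: if `x + Cⱼ` meets `y + Cₖ` with `k ≤ j`, then `x + Cⱼ ⊆ y + 3Cₖ`, a
set of Haar measure `3ᵈ μ(Cₖ)`. Vitali's disjoint-subfamily argument, run with the index `k` in
place of the radius, therefore makes the translates of the `Cₖ` a Vitali family for Lebesgue
measure, and the differentiation theorem along Vitali families gives the density statement.
-/

open MeasureTheory Filter Topology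

open Set Metric Pointwise
open scoped ENNReal

section Convex

variable {V : Type*} [AddCommGroup V] [Module ℝ V] {s : Set V}

theorem Convex.zero_mem_of_neg_mem (hs : Convex ℝ s) (hsymm : ∀ v ∈ s, -v ∈ s)
    (hne : s.Nonempty) : (0 : V) ∈ s := by
  obtain ⟨v, hv⟩ := hne
  convert hs hv (hsymm v hv) (by norm_num : (0 : ℝ) ≤ 1 / 2) (by norm_num : (0 : ℝ) ≤ 1 / 2)
    (by norm_num) using 1
  module

theorem Convex.add_sub_mem_three_smul (hs : Convex ℝ s) (hsymm : ∀ v ∈ s, -v ∈ s) {u v w : V}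
    (hu : u ∈ s) (hv : v ∈ s) (hw : w ∈ s) : u + v - w ∈ (3 : ℝ) • s := by
  have hmid : (1 / 2 : ℝ) • u + (1 / 2 : ℝ) • v ∈ s :=
    hs hu hv (by norm_num) (by norm_num) (by norm_num)
  refine ⟨(2 / 3 : ℝ) • ((1 / 2 : ℝ) • u + (1 / 2 : ℝ) • v) + (1 / 3 : ℝ) • -w,
    hs hmid (hsymm w hw) (by norm_num) (by norm_num) (by norm_num), ?_⟩
  module

theorem Convex.vadd_subset_vadd_three_smul {t : Set V} (hs : Convex ℝ s)
    (hsymm : ∀ v ∈ s, -v ∈ s) (hts : t ⊆ s) {x y : V}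
    (h : ((x +ᵥ t) ∩ (y +ᵥ s)).Nonempty) : x +ᵥ t ⊆ y +ᵥ (3 : ℝ) • s := by
  obtain ⟨_, ⟨a, ha, rfl⟩, b, hb, hab⟩ := h
  rintro _ ⟨c, hc, rfl⟩
  refine ⟨b + c - a, hs.add_sub_mem_three_smul hsymm hb (hts hc) (hts ha), ?_⟩
  simp only [vadd_eq_add] at hab ⊢
  calc y + (b + c - a) = y + b + c - a := by abel
    _ = x + c := by rw [hab]; abel

end Convex

theorem measure_diff_biUnion_eq_zero_of_forall_mem_enlargement {α ι : Type*}
    [PseudoMetricSpace α] [ProperSpace α] [MeasurableSpace α] [OpensMeasurableSpace α]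
    (μ : Measure α) [IsLocallyFiniteMeasure μ] {u : Set ι} (hu : u.Countable)
    {B D : ι → Set α} {c : ι → α} (hdisj : u.PairwiseDisjoint B)
    (hclosed : ∀ b ∈ u, IsClosed (B b)) (hBc : ∀ b ∈ u, B b ⊆ closedBall (c b) 1)
    {K : ℝ≥0∞} (hK : K ≠ ∞) (hD : ∀ b ∈ u, μ (D b) ≤ K * μ (B b)) {s : Set α}
    (hs : ∀ z ∈ s, ∀ ε > 0, ∃ b ∈ u, (B b ∩ closedBall z ε).Nonempty ∧ z ∈ D b) :
    μ (s \ ⋃ b ∈ u, B b) = 0 := by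
  refine measure_null_of_locally_null _ fun x _ ↦
    ⟨_, inter_mem_nhdsWithin _ (ball_mem_nhds x one_pos), ?_⟩
  set v := {b ∈ u | (B b ∩ ball x 1).Nonempty}
  have hvu : v ⊆ u := sep_subset _ _
  have : Countable v := (hu.mono hvu).to_subtype
  have hv_sub : ⋃ b ∈ v, B b ⊆ closedBall x 3 := by
    refine iUnion₂_subset fun b ⟨hb, p, hpB, hpx⟩ ↦ (hBc b hb).trans ?_
    refine closedBall_subset_closedBall' ?_
    have hpc : dist p (c b) ≤ 1 := hBc b hb hpB
    linarith [dist_triangle (c b) p x, dist_comm p (c b), mem_ball.1 hpx]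
  have hsum : ∑' b : v, μ (D b) ≠ ∞ := by
    refine ne_top_of_le_ne_top
      (ENNReal.mul_ne_top hK ((isCompact_closedBall x 3).measure_lt_top (μ := μ)).ne) ?_
    calc ∑' b : v, μ (D b) ≤ ∑' b : v, K * μ (B b) :=
          ENNReal.tsum_le_tsum fun b ↦ hD b (hvu b.2)
      _ = K * μ (⋃ b ∈ v, B b) := by
          rw [ENNReal.tsum_mul_left, measure_biUnion (hu.mono hvu) (hdisj.subset hvu)
            fun b hb ↦ (hclosed b (hvu hb)).measurableSet]
      _ ≤ K * μ (closedBall x 3) := by gcongr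
  -- A point of `s` missed by the `B b` lies in infinitely many `D b`: Borel–Cantelli applies.
  refine measure_mono_null (fun z hz ↦ ?_) (ae_iff.1 (ae_finite_setOfPred_mem hsum))
  intro hfin
  set F := {b : v | z ∈ D b}
  have hF : IsClosed (⋃ b ∈ F, B b) := hfin.isClosed_biUnion fun b _ ↦ hclosed b (hvu b.2)
  have hzF : z ∉ ⋃ b ∈ F, B b := by
    simp only [mem_iUnion]
    rintro ⟨b, -, hzb⟩
    exact hz.1.2 (mem_biUnion (hvu b.2) hzb)
  obtain ⟨ε, hε, hball⟩ :=
    nhds_basis_closedBall.mem_iff.1 ((isOpen_ball.sdiff hF).mem_nhds ⟨hz.2, hzF⟩)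
  obtain ⟨b, hb, ⟨p, hpB, hpz⟩, hzD⟩ := hs z hz.1.1 ε hε
  exact (hball hpz).2 (mem_biUnion (x := ⟨b, hb, p, hpB, (hball hpz).1⟩) hzD hpB)

structure IsNestedSymmetricConvexBodies {V : Type*} [AddCommGroup V] [Module ℝ V]
    [TopologicalSpace V] (C : ℕ → Set V) : Prop where
  isClosed : ∀ k, IsClosed (C k)
  convex : ∀ k, Convex ℝ (C k)
  neg_mem : ∀ k, ∀ v ∈ C k, -v ∈ C k
  interior_nonempty : ∀ k, (interior (C k)).Nonempty
  antitone : Antitone C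

namespace IsNestedSymmetricConvexBodies

section Topological

variable {V : Type*} [AddCommGroup V] [Module ℝ V] [TopologicalSpace V] {C : ℕ → Set V}

theorem zero_mem (hC : IsNestedSymmetricConvexBodies C) (k : ℕ) : (0 : V) ∈ C k :=
  (hC.convex k).zero_mem_of_neg_mem (hC.neg_mem k) ((hC.interior_nonempty k).mono interior_subset)

theorem vadd_mem_vadd (hC : IsNestedSymmetricConvexBodies C) (x : V) (k : ℕ) : x ∈ x +ᵥ C k :=
  ⟨0, hC.zero_mem k, add_zero x⟩

end Topological

variable {V : Type*} [NormedAddCommGroup V] [NormedSpace ℝ V] [MeasurableSpace V] [BorelSpace V]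
  [FiniteDimensional ℝ V] {C : ℕ → Set V}

theorem exists_disjoint_covering_ae (hC : IsNestedSymmetricConvexBodies C) (μ : Measure V)
    [μ.IsAddHaarMeasure] {ι : Type*} {t : Set ι} (c : ι → V) (n : ι → ℕ) {s : Set V}
    (hf : ∀ x ∈ s, ∀ ε > 0, ∃ a ∈ t, c a = x ∧ c a +ᵥ C (n a) ⊆ closedBall x ε) :
    ∃ u ⊆ t, u.Countable ∧ u.PairwiseDisjoint (fun a ↦ c a +ᵥ C (n a)) ∧
      μ (s \ ⋃ a ∈ u, c a +ᵥ C (n a)) = 0 := by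
  set B : ι → Set V := fun a ↦ c a +ᵥ C (n a)
  -- Vitali's selection with radius `2⁻ⁿ`: the factor `3 / 2 < 2` forces `n b ≤ n a`.
  obtain ⟨u, hut, hdisj, hu⟩ := Vitali.exists_disjoint_subfamily_covering_enlargement B
    {a ∈ t | B a ⊆ closedBall (c a) 1} (fun a ↦ (2⁻¹ : ℝ) ^ n a) (3 / 2) (by norm_num)
    (fun _ _ ↦ by positivity) 1 (fun _ _ ↦ pow_le_one₀ (by norm_num) (by norm_num))
    fun a _ ↦ ⟨c a, hC.vadd_mem_vadd (c a) (n a)⟩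
  have hn : ∀ a b, (2⁻¹ : ℝ) ^ n a ≤ 3 / 2 * (2⁻¹ : ℝ) ^ n b → n b ≤ n a := by
    intro a b h
    by_contra! hlt
    have := pow_le_pow_of_le_one (by norm_num : (0 : ℝ) ≤ 2⁻¹) (by norm_num) hlt
    rw [pow_succ] at this
    nlinarith [pow_pos (by norm_num : (0 : ℝ) < 2⁻¹) (n a)]
  have hcount : u.Countable := hdisj.countable_of_nonempty_interior fun a _ ↦ by
    simpa only [B, interior_vadd] using (hC.interior_nonempty (n a)).vadd_set (a := c a)
  refine ⟨u, fun a ha ↦ (hut ha).1, hcount, hdisj, ?_⟩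
  refine measure_diff_biUnion_eq_zero_of_forall_mem_enlargement μ hcount hdisj
    (fun a _ ↦ (hC.isClosed _).vadd _) (fun a ha ↦ (hut ha).2)
    (D := fun b ↦ c b +ᵥ (3 : ℝ) • C (n b)) (K := ENNReal.ofReal (3 ^ Module.finrank ℝ V))
    ENNReal.ofReal_ne_top (fun b _ ↦ ?_) fun z hz ε hε ↦ ?_
  · simp only [B, measure_vadd, Measure.addHaar_smul, abs_pow,
      abs_of_pos (by norm_num : (0 : ℝ) < 3), le_refl]
  · obtain ⟨a, hat, rfl, haε⟩ := hf z hz (min ε 1) (lt_min hε one_pos)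
    obtain ⟨b, hbu, hab, hnab⟩ := hu a
      ⟨hat, haε.trans (closedBall_subset_closedBall (min_le_right _ _))⟩
    refine ⟨b, hbu, ?_, ?_⟩
    · obtain ⟨p, hpa, hpb⟩ := hab
      exact ⟨p, hpb, closedBall_subset_closedBall (min_le_left _ _) (haε hpa)⟩
    · exact (hC.convex (n b)).vadd_subset_vadd_three_smul (hC.neg_mem _)
        (hC.antitone (hn a b hnab)) hab (hC.vadd_mem_vadd (c a) (n a))

noncomputable def vitaliFamily (hC : IsNestedSymmetricConvexBodies C) (μ : Measure V)
    [μ.IsAddHaarMeasure] (hsmall : ∀ ε > 0, ∃ k, C k ⊆ closedBall 0 ε) : VitaliFamily μ where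
  setsAt x := range fun k ↦ x +ᵥ C k
  measurableSet := by
    rintro x _ ⟨k, rfl⟩
    exact ((hC.isClosed k).vadd x).measurableSet
  nonempty_interior := by
    rintro x _ ⟨k, rfl⟩
    rw [interior_vadd]
    exact (hC.interior_nonempty k).vadd_set
  nontrivial x ε hε := by
    obtain ⟨k, hk⟩ := hsmall ε hε
    refine ⟨x +ᵥ C k, mem_range_self k, ?_⟩
    simpa using vadd_set_mono (a := x) hk
  covering s f hfs hf := by
    set t := {p : V × Set V | p.1 ∈ s ∧ p.2 ∈ f p.1}
    choose! n hn using fun p (hp : p ∈ t) ↦ hfs p.1 hp.1 hp.2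
    obtain ⟨u, hut, -, hdisj, hμ⟩ := hC.exists_disjoint_covering_ae μ Prod.fst n (t := t)
      fun x hx ε hε ↦ by
        obtain ⟨a, ha, haε⟩ := hf x hx ε hε
        exact ⟨(x, a), ⟨hx, ha⟩, rfl, (hn (x, a) ⟨hx, ha⟩).trans_subset haε⟩
    refine ⟨u, fun p hp ↦ (hut hp).1, fun p hp q hq hpq ↦ ?_, fun p hp ↦ (hut hp).2, ?_⟩
    · rw [Function.onFun, ← hn p (hut hp), ← hn q (hut hq)]
      exact hdisj hp hq hpq
    · rwa [iUnion₂_congr fun p hp ↦ (hn p (hut hp)).symm]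

theorem tendsto_vadd_filterAt (hC : IsNestedSymmetricConvexBodies C) (μ : Measure V)
    [μ.IsAddHaarMeasure] (hsmall : ∀ ε > 0, ∃ k, C k ⊆ closedBall 0 ε) (x : V) :
    Tendsto (fun k ↦ x +ᵥ C k) atTop ((hC.vitaliFamily μ hsmall).filterAt x) := by
  refine (VitaliFamily.tendsto_filterAt_iff _).2
    ⟨Eventually.of_forall fun k ↦ mem_range_self k, fun ε hε ↦ ?_⟩
  obtain ⟨k, hk⟩ := hsmall ε hε
  filter_upwards [eventually_ge_atTop k] with j hj
  simpa using vadd_set_mono (a := x) ((hC.antitone hj).trans hk)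

end IsNestedSymmetricConvexBodies

namespace ContinuousLinearEquiv

variable {E : Type*} [NormedAddCommGroup E] [NormedSpace ℝ E] (L : E ≃L[ℝ] E)

theorem image_closedBall_eq_vadd (y : E) (δ : ℝ) :
    L '' closedBall y δ = L y +ᵥ L '' closedBall 0 δ := by
  rw [← image_vadd_distrib, vadd_closedBall, vadd_eq_add, add_zero]

theorem norm_pow_apply_le (k : ℕ) (v : E) : ‖(L ^ k) v‖ ≤ ‖(L : E →L[ℝ] E)‖ ^ k * ‖v‖ := by
  induction k generalizing v with
  | zero => rw [pow_zero, pow_zero, one_mul]; exact le_rfl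
  | succ k ih =>
    calc ‖(L ^ (k + 1)) v‖ = ‖(L ^ k) (L v)‖ := by rw [pow_succ]; rfl
      _ ≤ ‖(L : E →L[ℝ] E)‖ ^ k * (‖(L : E →L[ℝ] E)‖ * ‖v‖) :=
        (ih (L v)).trans (by gcongr; exact (L : E →L[ℝ] E).le_opNorm v)
      _ = ‖(L : E →L[ℝ] E)‖ ^ (k + 1) * ‖v‖ := by ring

theorem image_pow_closedBall_subset (k : ℕ) (δ : ℝ) :
    (L ^ k) '' closedBall 0 δ ⊆ closedBall 0 (‖(L : E →L[ℝ] E)‖ ^ k * δ) := by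
  rintro _ ⟨v, hv, rfl⟩
  rw [mem_closedBall_zero_iff] at hv ⊢
  exact (L.norm_pow_apply_le k v).trans (by gcongr)

theorem isNestedSymmetricConvexBodies_image_pow_closedBall (hL : ‖(L : E →L[ℝ] E)‖ ≤ 1)
    {δ : ℝ} (hδ : 0 < δ) :
    IsNestedSymmetricConvexBodies fun k ↦ (L ^ k) '' closedBall (0 : E) δ where
  isClosed k := (L ^ k).toHomeomorph.isClosedMap _ isClosed_closedBall
  convex k := (convex_closedBall 0 δ).linear_image ((L ^ k : E ≃L[ℝ] E) : E →ₗ[ℝ] E)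
  neg_mem k := by
    rintro _ ⟨v, hv, rfl⟩
    exact ⟨-v, by simpa using hv, map_neg _ v⟩
  interior_nonempty k := by
    rw [← coe_toHomeomorph, ← Homeomorph.image_interior]
    exact ((nonempty_ball.2 hδ).mono ball_subset_interior_closedBall).image _
  antitone := antitone_nat_of_succ_le fun k ↦ by
    rintro _ ⟨v, hv, rfl⟩
    refine ⟨L v, ?_, by rw [pow_succ]; rfl⟩
    rw [mem_closedBall_zero_iff] at hv ⊢
    exact ((L : E →L[ℝ] E).le_opNorm v).trans ((mul_le_of_le_one_left (norm_nonneg v) hL).trans hv)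

theorem exists_image_pow_closedBall_subset (hL : ‖(L : E →L[ℝ] E)‖ < 1) (δ : ℝ) :
    ∀ ε > 0, ∃ k : ℕ, (L ^ k) '' closedBall (0 : E) δ ⊆ closedBall 0 ε := by
  intro ε hε
  have hlim : Tendsto (fun k ↦ ‖(L : E →L[ℝ] E)‖ ^ k * δ) atTop (𝓝 0) := by
    simpa using (tendsto_pow_atTop_nhds_zero_of_lt_one (norm_nonneg _) hL).mul_const δ
  obtain ⟨k, hk⟩ := (hlim.eventually (gt_mem_nhds hε)).exists
  exact ⟨k, (L.image_pow_closedBall_subset k δ).trans (closedBall_subset_closedBall hk.le)⟩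

end ContinuousLinearEquiv

theorem dynamical_density_points_full_measure_general
    {d : ℕ}
    (T : EuclideanSpace ℝ (Fin d) ≃L[ℝ] EuclideanSpace ℝ (Fin d))
    (hT : ‖((T⁻¹ : EuclideanSpace ℝ (Fin d) ≃L[ℝ] EuclideanSpace ℝ (Fin d)) :
        EuclideanSpace ℝ (Fin d) →L[ℝ] EuclideanSpace ℝ (Fin d))‖ < 1)
    (δ : ℝ) (hδ : 0 < δ)
    (B : EuclideanSpace ℝ (Fin d) → ℕ → Set (EuclideanSpace ℝ (Fin d)))
    (hB : ∀ x k, B x k = (T⁻¹ ^ k) '' Metric.closedBall ((T ^ k) x) δ)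
    (S : Set (EuclideanSpace ℝ (Fin d))) :
    ∀ᵐ x ∂(volume : Measure (EuclideanSpace ℝ (Fin d))), x ∈ S →
      Tendsto (fun k => volume (B x k ∩ S) / volume (B x k)) atTop (𝓝 1) := by
  have hC := T⁻¹.isNestedSymmetricConvexBodies_image_pow_closedBall hT.le hδ
  have hsmall := T⁻¹.exists_image_pow_closedBall_subset hT δ
  have hBC : ∀ x k, B x k = x +ᵥ (T⁻¹ ^ k) '' closedBall 0 δ := fun x k ↦ by
    rw [hB, ContinuousLinearEquiv.image_closedBall_eq_vadd, inv_pow]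
    exact congrArg (· +ᵥ _) ((T ^ k).symm_apply_apply x)
  filter_upwards [ae_imp_of_ae_restrict
    ((hC.vitaliFamily volume hsmall).ae_tendsto_measure_inter_div S)] with x hx hxS
  simpa only [hBC, inter_comm S, Function.comp_def] using
    (hx hxS).comp (hC.tendsto_vadd_filterAt volume hsmall x)

/-- For an expanding invertible linear map `T` on `ℝᵈ` (i.e. `‖T⁻¹‖ < 1`) and the
dynamically defined basis `B k x = T⁻ᵏ (closedBall (Tᵏ x) δ)`, Lebesgue-almost every
point of a measurable set `S` is a dynamical density point of `S`. -/
theorem dynamical_density_points_full_measure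
    {d : ℕ}
    (T : EuclideanSpace ℝ (Fin d) ≃L[ℝ] EuclideanSpace ℝ (Fin d))
    (hT : ‖((T⁻¹ : EuclideanSpace ℝ (Fin d) ≃L[ℝ] EuclideanSpace ℝ (Fin d)) :
        EuclideanSpace ℝ (Fin d) →L[ℝ] EuclideanSpace ℝ (Fin d))‖ < 1)
    (δ : ℝ) (hδ : 0 < δ)
    (B : EuclideanSpace ℝ (Fin d) → ℕ → Set (EuclideanSpace ℝ (Fin d)))
    (hB : ∀ x k, B x k = (T⁻¹ ^ k) '' Metric.closedBall ((T ^ k) x) δ)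
    (S : Set (EuclideanSpace ℝ (Fin d))) (hS : MeasurableSet S) :
    ∀ᵐ x ∂(volume : Measure (EuclideanSpace ℝ (Fin d))), x ∈ S →
      Tendsto (fun k => volume (B x k ∩ S) / volume (B x k)) atTop (𝓝 1) :=
  dynamical_density_points_full_measure_general T hT δ hδ B hB S
end

section
/- Let T : ℝᵈ → ℝᵈ be an invertible linear map with ‖T⁻¹‖ < 1, let δ > 0, and for x ∈ ℝᵈ and k ∈ ℕ define the dynamical basis set B_k(x) = T⁻ᵏ(closedBall(Tᵏx, δ)) = {x + T⁻ᵏv : ‖v‖ ≤ δ}. Then: (a) Scaling: for all x ∈ ℝᵈ and n ∈ ℕ, the Lebesgue measures satisfy m(B_n(x)) = |det T| · m(B_{n+1}(x)); in particular m(B_n(x))/m(B_{n+1}(x)) is constant in n and x. (b) Engulfing: there exists L ∈ ℕ (any L with 3‖T⁻¹‖ᴸ ≤ 1 works) such that for all n ∈ ℕ and all x, y ∈ ℝᵈ, if B_{n+L}(x) ∩ B_{n+L}(y) ≠ ∅ then B_{n+L}(x) ∪ B_{n+L}(y) ⊆ B_n(x). -/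
open MeasureTheory Filter Topology

/-- Scaling and engulfing for the dynamical density basis
`B k x = T⁻ᵏ (closedBall (Tᵏ x) δ)` of an expanding invertible linear map `T` on `ℝᵈ`:
(a) `m (B n x) = |det T| · m (B (n+1) x)`; (b) any `L` with `3‖T⁻¹‖ᴸ ≤ 1` (and such `L`
exists) satisfies the engulfing property. -/
theorem dynamical_basis_scaling_and_engulfing
    {d : ℕ}
    (T : EuclideanSpace ℝ (Fin d) ≃L[ℝ] EuclideanSpace ℝ (Fin d))
    (hT : ‖((T⁻¹ : EuclideanSpace ℝ (Fin d) ≃L[ℝ] EuclideanSpace ℝ (Fin d)) :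
        EuclideanSpace ℝ (Fin d) →L[ℝ] EuclideanSpace ℝ (Fin d))‖ < 1)
    (δ : ℝ) (hδ : 0 < δ)
    (B : EuclideanSpace ℝ (Fin d) → ℕ → Set (EuclideanSpace ℝ (Fin d)))
    (hB : ∀ x k, B x k = (T⁻¹ ^ k) '' Metric.closedBall ((T ^ k) x) δ) :
    -- (a) Scaling
    (∀ (x : EuclideanSpace ℝ (Fin d)) (n : ℕ),
      volume (B x n) =
        ENNReal.ofReal |((T : EuclideanSpace ℝ (Fin d) →L[ℝ] EuclideanSpace ℝ (Fin d))).det| *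
          volume (B x (n + 1)))
    ∧
    -- (b) Engulfing: some L with 3‖T⁻¹‖ᴸ ≤ 1 exists, and any such L works
    (∃ L : ℕ, 3 * ‖((T⁻¹ : EuclideanSpace ℝ (Fin d) ≃L[ℝ] EuclideanSpace ℝ (Fin d)) :
        EuclideanSpace ℝ (Fin d) →L[ℝ] EuclideanSpace ℝ (Fin d))‖ ^ L ≤ 1)
    ∧
    (∀ L : ℕ, 3 * ‖((T⁻¹ : EuclideanSpace ℝ (Fin d) ≃L[ℝ] EuclideanSpace ℝ (Fin d)) :
        EuclideanSpace ℝ (Fin d) →L[ℝ] EuclideanSpace ℝ (Fin d))‖ ^ L ≤ 1 →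
      ∀ (n : ℕ) (x y : EuclideanSpace ℝ (Fin d)),
        (B x (n + L) ∩ B y (n + L)).Nonempty → B x (n + L) ∪ B y (n + L) ⊆ B x n) := by
  -- membership characterization
  have hmem : ∀ (x : (EuclideanSpace ℝ (Fin d))) (k : ℕ) (z : (EuclideanSpace ℝ (Fin d))), z ∈ B x k ↔ ‖(T ^ k) z - (T ^ k) x‖ ≤ δ := by
    intro x k z
    rw [hB]
    constructor
    · rintro ⟨v, hv, rfl⟩
      have h1 : (T ^ k) ((T⁻¹ ^ k) v) = v := by
        have h2 : (T ^ k) * (T⁻¹ ^ k) = 1 := by rw [inv_pow, mul_inv_cancel]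
        calc (T ^ k) ((T⁻¹ ^ k) v) = ((T ^ k) * (T⁻¹ ^ k)) v := rfl
          _ = v := by rw [h2]; rfl
      rw [h1, ← dist_eq_norm]
      exact hv
    · intro h
      refine ⟨(T ^ k) z, ?_, ?_⟩
      · rw [Metric.mem_closedBall, dist_eq_norm]; exact h
      · have h2 : (T⁻¹ ^ k) * (T ^ k) = 1 := by rw [inv_pow, inv_mul_cancel]
        calc (T⁻¹ ^ k) ((T ^ k) z) = ((T⁻¹ ^ k) * (T ^ k)) z := rfl
          _ = z := by rw [h2]; rfl
  -- norm of the inverse powers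
  have hnorm : ∀ (L : ℕ) (v : (EuclideanSpace ℝ (Fin d))), ‖(T⁻¹ ^ L) v‖ ≤
      ‖((T⁻¹ : (EuclideanSpace ℝ (Fin d)) ≃L[ℝ] (EuclideanSpace ℝ (Fin d))) : (EuclideanSpace ℝ (Fin d)) →L[ℝ] (EuclideanSpace ℝ (Fin d)))‖ ^ L * ‖v‖ := by
    intro L
    induction L with
    | zero =>
      intro v
      rw [pow_zero, pow_zero, one_mul]
      exact le_of_eq rfl
    | succ L ih =>
      intro v
      have h1 : (T⁻¹ ^ (L + 1)) v = (T⁻¹ ^ L) ((T⁻¹ : (EuclideanSpace ℝ (Fin d)) ≃L[ℝ] (EuclideanSpace ℝ (Fin d))) v) := by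
        rw [pow_succ]; rfl
      have h2 : ‖(T⁻¹ : (EuclideanSpace ℝ (Fin d)) ≃L[ℝ] (EuclideanSpace ℝ (Fin d))) v‖ ≤ ‖((T⁻¹ : (EuclideanSpace ℝ (Fin d)) ≃L[ℝ] (EuclideanSpace ℝ (Fin d))) : (EuclideanSpace ℝ (Fin d)) →L[ℝ] (EuclideanSpace ℝ (Fin d)))‖ * ‖v‖ :=
        ((T⁻¹ : (EuclideanSpace ℝ (Fin d)) ≃L[ℝ] (EuclideanSpace ℝ (Fin d))) : (EuclideanSpace ℝ (Fin d)) →L[ℝ] (EuclideanSpace ℝ (Fin d))).le_opNorm v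
      calc ‖(T⁻¹ ^ (L + 1)) v‖ = ‖(T⁻¹ ^ L) ((T⁻¹ : (EuclideanSpace ℝ (Fin d)) ≃L[ℝ] (EuclideanSpace ℝ (Fin d))) v)‖ := by rw [h1]
        _ ≤ ‖((T⁻¹ : (EuclideanSpace ℝ (Fin d)) ≃L[ℝ] (EuclideanSpace ℝ (Fin d))) : (EuclideanSpace ℝ (Fin d)) →L[ℝ] (EuclideanSpace ℝ (Fin d)))‖ ^ L * ‖(T⁻¹ : (EuclideanSpace ℝ (Fin d)) ≃L[ℝ] (EuclideanSpace ℝ (Fin d))) v‖ := ih _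
        _ ≤ ‖((T⁻¹ : (EuclideanSpace ℝ (Fin d)) ≃L[ℝ] (EuclideanSpace ℝ (Fin d))) : (EuclideanSpace ℝ (Fin d)) →L[ℝ] (EuclideanSpace ℝ (Fin d)))‖ ^ L *
            (‖((T⁻¹ : (EuclideanSpace ℝ (Fin d)) ≃L[ℝ] (EuclideanSpace ℝ (Fin d))) : (EuclideanSpace ℝ (Fin d)) →L[ℝ] (EuclideanSpace ℝ (Fin d)))‖ * ‖v‖) := by
            apply mul_le_mul_of_nonneg_left h2 (by positivity)
        _ = ‖((T⁻¹ : (EuclideanSpace ℝ (Fin d)) ≃L[ℝ] (EuclideanSpace ℝ (Fin d))) : (EuclideanSpace ℝ (Fin d)) →L[ℝ] (EuclideanSpace ℝ (Fin d)))‖ ^ (L + 1) * ‖v‖ := by ring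
  refine ⟨?_, ?_, ?_⟩
  · -- (a) scaling
    have hvol : ∀ (x : (EuclideanSpace ℝ (Fin d))) (k : ℕ), volume (B x k) =
        ENNReal.ofReal |LinearMap.det ((T⁻¹ ^ k : (EuclideanSpace ℝ (Fin d)) ≃L[ℝ] (EuclideanSpace ℝ (Fin d))) : (EuclideanSpace ℝ (Fin d)) →ₗ[ℝ] (EuclideanSpace ℝ (Fin d)))| *
          volume (Metric.closedBall (0 : (EuclideanSpace ℝ (Fin d))) δ) := by
      intro x k
      rw [hB, MeasureTheory.Measure.addHaar_image_continuousLinearEquiv,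
        MeasureTheory.Measure.addHaar_closedBall_center]
    intro x n
    have hmulg : T * T⁻¹ ^ (n + 1) = T⁻¹ ^ n := by
      rw [pow_succ']; exact mul_inv_cancel_left T (T⁻¹ ^ n)
    have hc : (T ^ (n + 1)) ((T⁻¹ : (EuclideanSpace ℝ (Fin d)) ≃L[ℝ] (EuclideanSpace ℝ (Fin d))) x) = (T ^ n) x := by
      have h : T ^ (n + 1) * T⁻¹ = T ^ n := by rw [pow_succ, mul_inv_cancel_right]
      calc (T ^ (n + 1)) ((T⁻¹ : (EuclideanSpace ℝ (Fin d)) ≃L[ℝ] (EuclideanSpace ℝ (Fin d))) x) = (T ^ (n + 1) * T⁻¹) x := rfl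
        _ = (T ^ n) x := by rw [h]
    have him : (T : (EuclideanSpace ℝ (Fin d)) ≃L[ℝ] (EuclideanSpace ℝ (Fin d))) '' B ((T⁻¹ : (EuclideanSpace ℝ (Fin d)) ≃L[ℝ] (EuclideanSpace ℝ (Fin d))) x) (n + 1) = B x n := by
      rw [hB, hB, hc, ← Set.image_comp]
      have hfun : ((T : (EuclideanSpace ℝ (Fin d)) ≃L[ℝ] (EuclideanSpace ℝ (Fin d))) : (EuclideanSpace ℝ (Fin d)) → (EuclideanSpace ℝ (Fin d))) ∘ ((T⁻¹ ^ (n + 1) : (EuclideanSpace ℝ (Fin d)) ≃L[ℝ] (EuclideanSpace ℝ (Fin d))) : (EuclideanSpace ℝ (Fin d)) → (EuclideanSpace ℝ (Fin d)))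
          = ((T⁻¹ ^ n : (EuclideanSpace ℝ (Fin d)) ≃L[ℝ] (EuclideanSpace ℝ (Fin d))) : (EuclideanSpace ℝ (Fin d)) → (EuclideanSpace ℝ (Fin d))) := by
        funext v
        calc (T : (EuclideanSpace ℝ (Fin d)) ≃L[ℝ] (EuclideanSpace ℝ (Fin d))) ((T⁻¹ ^ (n + 1)) v) = (T * T⁻¹ ^ (n + 1)) v := rfl
          _ = (T⁻¹ ^ n) v := by rw [hmulg]
      rw [hfun]
    have hdet : LinearMap.det (((T : (EuclideanSpace ℝ (Fin d)) ≃L[ℝ] (EuclideanSpace ℝ (Fin d))) : (EuclideanSpace ℝ (Fin d)) →ₗ[ℝ] (EuclideanSpace ℝ (Fin d)))) =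
        ((T : (EuclideanSpace ℝ (Fin d)) →L[ℝ] (EuclideanSpace ℝ (Fin d)))).det := rfl
    calc volume (B x n) = volume ((T : (EuclideanSpace ℝ (Fin d)) ≃L[ℝ] (EuclideanSpace ℝ (Fin d))) '' B ((T⁻¹ : (EuclideanSpace ℝ (Fin d)) ≃L[ℝ] (EuclideanSpace ℝ (Fin d))) x) (n + 1)) := by
          rw [him]
      _ = ENNReal.ofReal |LinearMap.det (((T : (EuclideanSpace ℝ (Fin d)) ≃L[ℝ] (EuclideanSpace ℝ (Fin d))) : (EuclideanSpace ℝ (Fin d)) →ₗ[ℝ] (EuclideanSpace ℝ (Fin d))))| *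
          volume (B ((T⁻¹ : (EuclideanSpace ℝ (Fin d)) ≃L[ℝ] (EuclideanSpace ℝ (Fin d))) x) (n + 1)) := by
          rw [MeasureTheory.Measure.addHaar_image_continuousLinearEquiv]
      _ = ENNReal.ofReal |((T : (EuclideanSpace ℝ (Fin d)) →L[ℝ] (EuclideanSpace ℝ (Fin d)))).det| * volume (B x (n + 1)) := by
          rw [hdet, hvol, hvol]
  · -- existence of L
    have h0 : (0 : ℝ) ≤ ‖((T⁻¹ : (EuclideanSpace ℝ (Fin d)) ≃L[ℝ] (EuclideanSpace ℝ (Fin d))) : (EuclideanSpace ℝ (Fin d)) →L[ℝ] (EuclideanSpace ℝ (Fin d)))‖ := norm_nonneg _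
    have := tendsto_pow_atTop_nhds_zero_of_lt_one h0 hT
    have h3 : ∀ᶠ L in atTop, ‖((T⁻¹ : (EuclideanSpace ℝ (Fin d)) ≃L[ℝ] (EuclideanSpace ℝ (Fin d))) : (EuclideanSpace ℝ (Fin d)) →L[ℝ] (EuclideanSpace ℝ (Fin d)))‖ ^ L < 1 / 3 := by
      have := this.eventually (eventually_lt_nhds (by norm_num : (0:ℝ) < 1/3))
      exact this
    obtain ⟨L, hL⟩ := h3.exists
    exact ⟨L, by linarith⟩
  · -- engulfing
    intro L hL n x y ⟨z, hzx, hzy⟩ w hw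
    rw [hmem] at hzx hzy ⊢
    have hLpow : 0 ≤ ‖((T⁻¹ : (EuclideanSpace ℝ (Fin d)) ≃L[ℝ] (EuclideanSpace ℝ (Fin d))) : (EuclideanSpace ℝ (Fin d)) →L[ℝ] (EuclideanSpace ℝ (Fin d)))‖ ^ L := by positivity
    have hg : (T⁻¹ ^ L) * T ^ (n + L) = T ^ n := by
      rw [inv_pow, add_comm, pow_add, inv_mul_cancel_left]
    have happ : ∀ c u : (EuclideanSpace ℝ (Fin d)), (T ^ n) u - (T ^ n) c =
        (T⁻¹ ^ L) ((T ^ (n + L)) u - (T ^ (n + L)) c) := by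
      intro c u
      rw [map_sub]
      congr 1 <;>
      · rw [← hg]; rfl
    rcases hw with hw | hw
    · rw [hmem] at hw
      have h1 := hnorm L ((T ^ (n + L)) w - (T ^ (n + L)) x)
      rw [← happ] at h1
      have h2 : ‖((T⁻¹ : (EuclideanSpace ℝ (Fin d)) ≃L[ℝ] (EuclideanSpace ℝ (Fin d))) : (EuclideanSpace ℝ (Fin d)) →L[ℝ] (EuclideanSpace ℝ (Fin d)))‖ ^ L * ‖(T ^ (n + L)) w - (T ^ (n + L)) x‖ ≤
          ‖((T⁻¹ : (EuclideanSpace ℝ (Fin d)) ≃L[ℝ] (EuclideanSpace ℝ (Fin d))) : (EuclideanSpace ℝ (Fin d)) →L[ℝ] (EuclideanSpace ℝ (Fin d)))‖ ^ L * δ :=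
        mul_le_mul_of_nonneg_left hw hLpow
      nlinarith
    · rw [hmem] at hw
      have htri : ‖(T ^ (n + L)) w - (T ^ (n + L)) x‖ ≤ 3 * δ := by
        have e1 : (T ^ (n + L)) w - (T ^ (n + L)) x =
            ((T ^ (n + L)) w - (T ^ (n + L)) y) + ((T ^ (n + L)) y - (T ^ (n + L)) z)
            + ((T ^ (n + L)) z - (T ^ (n + L)) x) := by abel
        have e2 : ‖(T ^ (n + L)) y - (T ^ (n + L)) z‖ = ‖(T ^ (n + L)) z - (T ^ (n + L)) y‖ :=
          norm_sub_rev _ _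
        calc ‖(T ^ (n + L)) w - (T ^ (n + L)) x‖ ≤
            ‖((T ^ (n + L)) w - (T ^ (n + L)) y) + ((T ^ (n + L)) y - (T ^ (n + L)) z)‖
            + ‖(T ^ (n + L)) z - (T ^ (n + L)) x‖ := by rw [e1]; exact norm_add_le _ _
          _ ≤ ‖(T ^ (n + L)) w - (T ^ (n + L)) y‖ + ‖(T ^ (n + L)) y - (T ^ (n + L)) z‖
            + ‖(T ^ (n + L)) z - (T ^ (n + L)) x‖ := by
              gcongr; exact norm_add_le _ _
          _ ≤ δ + δ + δ := by rw [e2]; gcongr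
          _ = 3 * δ := by ring
      have h1 := hnorm L ((T ^ (n + L)) w - (T ^ (n + L)) x)
      rw [← happ] at h1
      have h2 : ‖((T⁻¹ : (EuclideanSpace ℝ (Fin d)) ≃L[ℝ] (EuclideanSpace ℝ (Fin d))) : (EuclideanSpace ℝ (Fin d)) →L[ℝ] (EuclideanSpace ℝ (Fin d)))‖ ^ L * ‖(T ^ (n + L)) w - (T ^ (n + L)) x‖ ≤
          ‖((T⁻¹ : (EuclideanSpace ℝ (Fin d)) ≃L[ℝ] (EuclideanSpace ℝ (Fin d))) : (EuclideanSpace ℝ (Fin d)) →L[ℝ] (EuclideanSpace ℝ (Fin d)))‖ ^ L * (3 * δ) :=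
        mul_le_mul_of_nonneg_left htri hLpow
      nlinarith
end
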